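/- arXiv:1805.02596 — 4 statements merged into one kernel-verified Lean document; each statement's English description precedes it below -/
import Mathlib

section
/- If a point x of a subshift X is periodic with minimal period k, then some subword of x of length k does not overlap itself nontrivially (i.e., no proper nonempty suffix of the word equals a prefix of it). -/
/-!
Order the alphabet arbitrarily and pick `i` for which the one-sided sequence `x_{[i, ∞)}` is
lexicographically least; by periodicity there are only `k` such sequences. If the window
`x_{[i, i + k)}` had a border of length `0 < l < k`, then by periodicity `x_{[i - l, ∞)}` would be
that border followed by `x_{[i, ∞)}`, while `x_{[i, ∞)}` is the same border followed by
`x_{[i + l, ∞)}`. Hence `x_{[i, ∞)} < x_{[i + l, ∞)}` would give `x_{[i - l, ∞)} < x_{[i, ∞)}`,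
so minimality forces `x_{[i + l, ∞)} = x_{[i, ∞)}`: `l` would be a period of `x`, contradicting
the minimality of `k`. (This is the classical proof that Lyndon words are unbordered.)
-/

/-- A word overlaps itself nontrivially: some proper nonempty suffix equals a prefix. -/
def OverlapsSelfNontrivially {A : Type*} (w : List A) : Prop :=
  ∃ l : ℕ, 0 < l ∧ l < w.length ∧ w.drop (w.length - l) = w.take l

open Function

section

variable {α : Type*}

theorem List.getElem_sub_add_eq_of_drop_eq_take {w : List α} {l d : ℕ}
    (h : w.drop (w.length - l) = w.take l) (hl : l ≤ w.length) (hd : d < l) :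
    w[w.length - l + d]'(by omega) = w[d]'(by omega) := by
  have h := List.getElem_of_eq h (i := d) (by simp; omega)
  simp only [List.getElem_drop, List.getElem_take] at h
  exact h

theorem toLex_lt_of_eq_of_shift_lt [LinearOrder α] {f g : ℕ → α} {l : ℕ}
    (hpre : ∀ d < l, f d = g d) (h : toLex (fun d => f (l + d)) < toLex (fun d => g (l + d))) :
    toLex f < toLex g := by
  obtain ⟨d, hagree, hd⟩ := h
  refine ⟨l + d, fun j hj => ?_, hd⟩
  rcases lt_or_ge j l with hjl | hjl
  · exact hpre j hjl
  · obtain ⟨e, rfl⟩ := Nat.exists_eq_add_of_le hjl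
    exact hagree e (by omega)

theorem Function.Periodic.exists_forall_le [LinearOrder α] {f : ℤ → α} {c : ℤ}
    (hf : Periodic f c) (hc : 0 < c) : ∃ p, ∀ q, f p ≤ f q := by
  obtain ⟨p, -, hp⟩ := (Finset.Ico 0 c).exists_min_image f ⟨0, by simp [hc]⟩
  refine ⟨p, fun q => ?_⟩
  obtain ⟨y, hy, hq⟩ := hf.exists_mem_Ico₀ hc q
  exact hq ▸ hp y (by simpa using hy)

/-- The one-sided sequence `x_{[i, ∞)}`. -/
def rayFrom (x : ℤ → α) (i : ℤ) : ℕ → α := fun d => x (i + d)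

theorem rayFrom_add_nat (x : ℤ → α) (i : ℤ) (l : ℕ) :
    (fun d => rayFrom x i (l + d)) = rayFrom x (i + l) := by
  funext d
  simp only [rayFrom, Nat.cast_add, add_assoc]

theorem Function.Periodic.periodic_rayFrom {x : ℤ → α} {c : ℤ} (hx : Periodic x c) :
    Periodic (rayFrom x) c := by
  intro i
  funext d
  simp only [rayFrom, add_right_comm i c, hx _]

theorem Function.Periodic.eq_of_rayFrom_eq {f g : ℤ → α} {c : ℤ} (hf : Periodic f c)
    (hg : Periodic g c) (hc : 0 < c) {p : ℤ} (h : rayFrom f p = rayFrom g p) : f = g := by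
  have hfg : Periodic (fun n => (f n, g n)) c := fun n => by simp only [hf n, hg n]
  funext n
  obtain ⟨y, hy, hny⟩ := hfg.exists_mem_Ico hc n p
  obtain ⟨d, rfl⟩ := Int.le.dest hy.1
  simp only [Prod.mk.injEq] at hny
  rw [hny.1, hny.2]
  exact congrFun h d

theorem Function.Periodic.apply_sub_add_eq_of_drop_eq_take {x : ℤ → α} {k l : ℕ}
    (hx : Periodic x k) {p : ℤ} (hl : l ≤ k)
    (h : (List.ofFn fun j : Fin k => x (p + (j : ℕ))).drop (k - l) =
      (List.ofFn fun j : Fin k => x (p + (j : ℕ))).take l) {d : ℕ} (hd : d < l) :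
    x (p - l + d) = x (p + d) := by
  have h := List.getElem_sub_add_eq_of_drop_eq_take
    (w := List.ofFn fun j : Fin k => x (p + (j : ℕ))) (by simpa using h) (by simpa using hl) hd
  simp only [List.length_ofFn, List.getElem_ofFn] at h
  rw [← h, ← hx]
  congr 1
  push_cast [Nat.cast_sub hl]
  ring

theorem rayFrom_add_eq_of_forall_le [LinearOrder α] {x : ℤ → α} {p : ℤ} {l : ℕ}
    (hp : ∀ q, toLex (rayFrom x p) ≤ toLex (rayFrom x q))
    (hborder : ∀ d < l, x (p - l + d) = x (p + d)) :
    rayFrom x (p + l) = rayFrom x p := by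
  refine (le_antisymm (hp _) (not_lt.1 fun hlt => (hp (p - l)).not_gt ?_)).symm
  refine toLex_lt_of_eq_of_shift_lt hborder ?_
  rwa [rayFrom_add_nat, rayFrom_add_nat, sub_add_cancel]

end

/-- If `x` is periodic with minimal period `k`, some subword of `x` of length `k`
does not overlap itself nontrivially. -/
theorem stmt2 {A : Type*} (x : ℤ → A) (k : ℕ) (hk : 0 < k)
    (hper : ∀ n : ℤ, x (n + k) = x n)
    (hmin : ∀ m : ℕ, 0 < m → (∀ n : ℤ, x (n + m) = x n) → k ≤ m) :
    ∃ i : ℤ, ¬ OverlapsSelfNontrivially (List.ofFn fun j : Fin k => x (i + (j : ℕ))) := by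
  obtain ⟨_, -⟩ := exists_wellFoundedLT A
  have hk' : (0 : ℤ) < k := by exact_mod_cast hk
  replace hper : Periodic x k := hper
  obtain ⟨p, hp⟩ := (hper.periodic_rayFrom.comp toLex).exists_forall_le hk'
  refine ⟨p, fun ⟨l, hl0, hlk, hdrop⟩ => ?_⟩
  rw [List.length_ofFn] at hlk hdrop
  have hray := rayFrom_add_eq_of_forall_le hp
    fun d hd => hper.apply_sub_add_eq_of_drop_eq_take hlk.le hdrop hd
  have hperl : Periodic x l := by
    refine congrFun ((hper.add_const l).eq_of_rayFrom_eq hper hk' (p := p) ?_)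
    funext d
    simpa [rayFrom, add_right_comm] using congrFun hray d
  exact (hmin l hl0 hperl).not_gt hlk
end

section
/- In a transitive sofic shift, for every n ∈ ℕ there exists a synchronizing word M of length at least n which does not overlap itself nontrivially. -/
def shift {A : Type*} (x : ℤ → A) : ℤ → A := fun n => x (n + 1)

def OccursIn {A : Type*} (w : List A) (x : ℤ → A) : Prop :=
  ∃ i : ℤ, ∀ j : Fin w.length, x (i + (j : ℕ)) = w.get j

def InLanguage {A : Type*} (X : Set (ℤ → A)) (w : List A) : Prop :=
  ∃ x ∈ X, OccursIn w x

def Synchronizing {A : Type*} (X : Set (ℤ → A)) (w : List A) : Prop :=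
  InLanguage X w ∧ ∀ u v : List A, InLanguage X (u ++ w) → InLanguage X (w ++ v) →
    InLanguage X (u ++ w ++ v)

/-!
Take a synchronizing word `s` and, by density of periodic points, a periodic point `y ∈ X` of
period `k` containing it. As `X` is infinite, some word of `X` does not occur in `y`, so by
transitivity a long window of `y` extends inside the language to a word `y[0, D) c` with
`c ≠ y D`. Colour the letters by whether they equal `c` and choose the phase `λ < k` at which
the colour sequence of `y` is lexicographically least among all its shifts. Then `y[λ, D) c`
does not overlap itself: a border would exhibit a shift of that sequence which is
lexicographically smaller (Duval's argument for Lyndon words). It lies in the language and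
contains `s`, hence is synchronizing.
-/

open Function Set

section

variable {A : Type*}

def window (x : ℤ → A) (i : ℤ) (m : ℕ) : List A := List.ofFn fun j : Fin m => x (i + j)

@[simp] lemma length_window (x : ℤ → A) (i : ℤ) (m : ℕ) : (window x i m).length = m := by
  simp [window]

lemma window_add (x : ℤ → A) (i : ℤ) (a b : ℕ) :
    window x i (a + b) = window x i a ++ window x (i + a) b := by
  simp only [window, List.ofFn_add, Fin.val_castLE, Fin.val_natAdd, Nat.cast_add, add_assoc]

lemma window_succ (x : ℤ → A) (i : ℤ) (m : ℕ) :
    window x i (m + 1) = x i :: window x (i + 1) m := by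
  simp only [window, List.ofFn_succ, Fin.val_zero, Fin.val_succ, Nat.cast_add, Nat.cast_one,
    Nat.cast_zero, add_zero]
  congr 2; funext j; ring_nf

lemma window_eq_window_iff {x y : ℤ → A} {i j : ℤ} {m : ℕ} :
    window x i m = window y j m ↔ ∀ l < m, x (i + l) = y (j + l) := by
  simp [window, List.ofFn_inj, funext_iff, Fin.forall_iff]

lemma occursIn_iff_window {w : List A} {x : ℤ → A} :
    OccursIn w x ↔ ∃ i, window x i w.length = w := by
  refine exists_congr fun i => ⟨fun h => ?_, fun h j => ?_⟩
  · exact List.ext_get (by simp) fun j _ hj => by simpa [window] using h ⟨j, hj⟩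
  · simpa [window] using
      List.getElem_of_eq h (by simp : (j : ℕ) < (window x i w.length).length)

lemma occursIn_window (x : ℤ → A) (i : ℤ) (m : ℕ) : OccursIn (window x i m) x :=
  occursIn_iff_window.2 ⟨i, by rw [length_window]⟩

lemma OccursIn.of_infix {w B : List A} {x : ℤ → A} (hB : OccursIn B x) (hwB : w <:+: B) :
    OccursIn w x := by
  obtain ⟨s, t, rfl⟩ := hwB
  obtain ⟨i, hi⟩ := occursIn_iff_window.1 hB
  rw [List.length_append, List.length_append, window_add, window_add] at hi
  have hsw := (List.append_inj hi (by simp)).1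
  exact occursIn_iff_window.2 ⟨i + s.length, (List.append_inj hsw (by simp)).2⟩

lemma InLanguage.of_infix {X : Set (ℤ → A)} {w B : List A} (hB : InLanguage X B)
    (hwB : w <:+: B) : InLanguage X w :=
  let ⟨x, hx, hocc⟩ := hB
  ⟨x, hx, hocc.of_infix hwB⟩

lemma Synchronizing.of_infix {X : Set (ℤ → A)} {w B : List A} (hw : Synchronizing X w)
    (hwB : w <:+: B) (hB : InLanguage X B) : Synchronizing X B := by
  obtain ⟨s, t, rfl⟩ := hwB
  refine ⟨hB, fun u v hu hv => ?_⟩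
  have hleft : InLanguage X (u ++ s ++ w) :=
    hu.of_infix ⟨[], t, by simp⟩
  have hright : InLanguage X (w ++ (t ++ v)) :=
    hv.of_infix ⟨s, [], by simp⟩
  simpa using hw.2 (u ++ s) (t ++ v) hleft hright

lemma Function.Periodic.window_add_mul {x : ℤ → A} {k : ℤ} (hx : Periodic x k) (i q : ℤ)
    (m : ℕ) : window x (i + q * k) m = window x i m := by
  have hq : Periodic x (q * k) := by simpa using hx.int_mul q
  simp only [window, add_right_comm i (q * k), hq _]

lemma Function.Periodic.window_infix_window {x : ℤ → A} {k : ℕ} (hx : Periodic x k)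
    (hk : 0 < k) (i j : ℤ) {m m' : ℕ} (h : k + m ≤ m') : window x i m <:+: window x j m' := by
  have hpos : (0 : ℤ) < k := by exact_mod_cast hk
  obtain ⟨r, hr⟩ := Int.eq_ofNat_of_zero_le (Int.emod_nonneg (i - j) hpos.ne')
  have hrk : r < k := by have := Int.emod_lt_of_pos (i - j) hpos; omega
  have hi : i = j + r + (i - j) / k * k := by
    rw [← hr, Int.emod_def]; ring
  rw [hi, hx.window_add_mul, show m' = r + (m + (m' - r - m)) by omega, window_add, window_add]
  rw [← List.append_assoc]
  exact List.infix_append _ _ _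

lemma exists_window_eq_of_mem_closure [TopologicalSpace A] [DiscreteTopology A]
    {S : Set (ℤ → A)} {x : ℤ → A} (hx : x ∈ closure S) (i : ℤ) (m : ℕ) :
    ∃ y ∈ S, window y i m = window x i m := by
  have hopen : IsOpen ((Finset.Ico i (i + m) : Set ℤ).pi fun j => {x j}) :=
    isOpen_set_pi (Finset.finite_toSet _) fun _ _ => isOpen_discrete _
  obtain ⟨y, hy, hyS⟩ := mem_closure_iff.1 hx _ hopen fun j _ => rfl
  exact ⟨y, hyS, window_eq_window_iff.2 fun l hl => hy _ (by simp; omega)⟩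

lemma mem_closure_range_shift_of_forall_occursIn [TopologicalSpace A] [DiscreteTopology A]
    {y z : ℤ → A} (h : ∀ i m, OccursIn (window z i m) y) :
    z ∈ closure (range fun d : ℤ => fun t => y (t + d)) := by
  refine mem_closure_iff.2 fun o ho hzo => ?_
  obtain ⟨I, u, hu, hIo⟩ := isOpen_pi_iff.1 ho z hzo
  obtain ⟨M, hM⟩ : ∃ M : ℕ, ∀ a ∈ I, a.natAbs ≤ M :=
    ⟨I.sup Int.natAbs, fun a ha => Finset.le_sup (f := Int.natAbs) ha⟩
  obtain ⟨i, hi⟩ := occursIn_iff_window.1 (h (-M) (2 * M + 1))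
  rw [length_window, window_eq_window_iff] at hi
  refine ⟨fun t => y (t + (i + M)), hIo fun a ha => ?_, i + M, rfl⟩
  have ha' := hM a ha
  have hya : y (a + (i + M)) = z a := by
    convert hi (a + M).toNat (by omega) using 2 <;> omega
  exact hya ▸ (hu a ha).2

lemma Function.Periodic.finite_range_shift {y : ℤ → A} {k : ℕ} (hy : Periodic y k)
    (hk : 0 < k) : (range fun d : ℤ => fun t => y (t + d)).Finite := by
  refine ((Set.finite_Ico (0 : ℤ) k).image fun d t => y (t + d)).subset ?_
  rintro _ ⟨d, rfl⟩
  refine ⟨d % k, ⟨Int.emod_nonneg _ (by omega), Int.emod_lt_of_pos _ (by omega)⟩,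
    funext fun t => ?_⟩
  have hq : Periodic y (d / k * k) := by simpa using hy.int_mul (d / k)
  show y (t + d % k) = y (t + d)
  rw [← hq, Int.emod_def]
  ring_nf

lemma exists_inLanguage_not_occursIn {X : Set (ℤ → A)} (hX : X.Infinite) {y : ℤ → A}
    {k : ℕ} (hy : Periodic y k) (hk : 0 < k) : ∃ w, InLanguage X w ∧ ¬ OccursIn w y := by
  let _ : TopologicalSpace A := ⊥
  have : DiscreteTopology A := ⟨rfl⟩
  by_contra! h
  refine hX ((hy.finite_range_shift hk).subset fun z hz => ?_)
  rw [← (hy.finite_range_shift hk).isClosed.closure_eq]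
  exact mem_closure_range_shift_of_forall_occursIn fun i m => h _ ⟨z, hz, occursIn_window z i m⟩

lemma exists_window_append_prefix {y : ℤ → A} {i : ℤ} {W : List A}
    (h : window y i W.length ≠ W) :
    ∃ (D : ℕ) (c : A), c ≠ y (i + D) ∧ window y i D ++ [c] <+: W := by
  induction W generalizing i with
  | nil => simp [window] at h
  | cons a W ih =>
    rw [List.length_cons, window_succ] at h
    by_cases ha : y i = a
    · obtain ⟨D, c, hc, hpre⟩ := ih fun hW => h (by rw [ha, hW])
      refine ⟨D + 1, c, by rwa [Nat.cast_succ, add_comm (D : ℤ) 1, ← add_assoc], ?_⟩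
      rw [window_succ, ha, List.cons_append]
      exact List.cons_prefix_cons.2 ⟨rfl, hpre⟩
    · exact ⟨0, a, by simpa [eq_comm] using ha, by simp [window]⟩

lemma exists_inLanguage_window_append_ne {X : Set (ℤ → A)}
    (htrans : ∀ u w : List A, InLanguage X u → InLanguage X w →
      ∃ v : List A, InLanguage X (u ++ v ++ w))
    {y : ℤ → A} (hy : y ∈ X) {w : List A} (hw : InLanguage X w) (hwy : ¬ OccursIn w y)
    (T : ℕ) :
    ∃ (D : ℕ) (c : A), T ≤ D ∧ c ≠ y D ∧ InLanguage X (window y 0 D ++ [c]) := by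
  obtain ⟨v, hv⟩ := htrans _ _ ⟨y, hy, occursIn_window y 0 T⟩ hw
  have hne : window y T (v ++ w).length ≠ v ++ w := fun h => hwy <| by
    rw [List.length_append, window_add] at h
    exact occursIn_iff_window.2 ⟨_, (List.append_inj h (by simp)).2⟩
  obtain ⟨D, c, hc, hpre⟩ := exists_window_append_prefix hne
  refine ⟨T + D, c, by omega, by rwa [Nat.cast_add], hv.of_infix ?_⟩
  rw [window_add, zero_add, List.append_assoc, List.append_assoc]
  exact ((List.prefix_append_right_inj _).2 hpre).isInfix

lemma OverlapsSelfNontrivially.map {β : Type*} {w : List A} (f : A → β)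
    (hw : OverlapsSelfNontrivially w) : OverlapsSelfNontrivially (w.map f) := by
  obtain ⟨l, hl0, hlw, h⟩ := hw
  refine ⟨l, hl0, by rwa [List.length_map], ?_⟩
  rw [List.length_map, ← List.map_drop, h, List.map_take]

lemma not_overlapsSelfNontrivially_ofFn_append {α : Type*} [LinearOrder α] {u : ℕ → α}
    (hu : ∀ t, toLex u ≤ toLex fun i => u (t + i)) {m : ℕ} {c : α} (hc : u m < c) :
    ¬ OverlapsSelfNontrivially (List.ofFn (fun j : Fin m => u j) ++ [c]) := by
  rintro ⟨l, hl0, hlm, hborder⟩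
  set B := List.ofFn (fun j : Fin m => u j) ++ [c]
  have hinit : ∀ i < m, B[i]? = some (u i) := fun i hi => by
    simp [B, List.getElem?_append, hi]
  have hlast : B[m]? = some c := by simp [B]
  have hlen : B.length = m + 1 := by simp [B]
  rw [hlen] at hlm hborder
  have hborder' : ∀ i < l, B[m + 1 - l + i]? = B[i]? := fun i hi => by
    simpa [List.getElem?_take, hi] using congrArg (·[i]?) hborder
  have hshift : toLex (fun i => u (m + 1 - l + i)) < toLex u := by
    refine ⟨l - 1, fun j hj => ?_, ?_⟩
    · simpa [hinit _ (show m + 1 - l + j < m by omega), hinit j (by omega)]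
        using hborder' j (by omega)
    · have hcl := hborder' (l - 1) (by omega)
      rw [show m + 1 - l + (l - 1) = m by omega, hlast, hinit _ (by omega)] at hcl
      simpa [show m + 1 - l + (l - 1) = m by omega, ← Option.some_injective _ hcl] using hc
  exact (hu _).not_gt hshift

lemma Function.Periodic.exists_lex_min_shift {α : Type*} [LinearOrder α] {G : ℤ → α}
    {k : ℕ} (hG : Periodic G k) (hk : 0 < k) :
    ∃ lam < k, ∀ t : ℕ,
      toLex (fun i : ℕ => G (lam + i)) ≤ toLex fun i : ℕ => G (lam + (t + i : ℕ)) := by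
  obtain ⟨lam, hlam, hmin⟩ := (Finset.range k).exists_min_image
    (fun r : ℕ => toLex fun i : ℕ => G (r + i)) (Finset.nonempty_range_iff.2 hk.ne')
  refine ⟨lam, Finset.mem_range.1 hlam, fun t => ?_⟩
  convert hmin ((lam + t) % k) (Finset.mem_range.2 (Nat.mod_lt _ hk)) using 2
  funext i
  have hq : Periodic G ((lam + t) / k * k : ℕ) := by simpa using hG.nat_mul ((lam + t) / k)
  rw [← hq (((lam + t) % k : ℕ) + i)]
  have h := Nat.mod_add_div (lam + t) k
  have : lam + (t + i) = (lam + t) % k + i + (lam + t) / k * k := by linarith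
  exact congrArg G (by exact_mod_cast this)

lemma Function.Periodic.exists_not_overlapsSelfNontrivially_window_append [DecidableEq A]
    {y : ℤ → A} {k : ℕ} (hy : Periodic y k) (hk : 0 < k) (c : A) :
    ∃ lam < k, ∀ m : ℕ, y (lam + m) ≠ c →
      ¬ OverlapsSelfNontrivially (window y lam m ++ [c]) := by
  obtain ⟨lam, hlam, hmin⟩ := (hy.comp fun a => decide (a = c)).exists_lex_min_shift hk
  refine ⟨lam, hlam, fun m hm hov => ?_⟩
  have hmap := hov.map fun a => decide (a = c)
  rw [List.map_append, window, List.map_ofFn] at hmap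
  refine not_overlapsSelfNontrivially_ofFn_append (u := fun i : ℕ => decide (y (lam + i) = c))
    (m := m) (c := true) hmin ?_ ?_
  · simp [hm]
  · simpa [comp_def] using hmap

end

theorem stmt3_general {A : Type*} [TopologicalSpace A] [DiscreteTopology A]
    (X : Set (ℤ → A))
    (hinf : X.Infinite)
    (htrans : ∀ u w : List A, InLanguage X u → InLanguage X w →
      ∃ v : List A, InLanguage X (u ++ v ++ w))
    (hsync : ∀ w : List A, InLanguage X w → ∃ u : List A, Synchronizing X (w ++ u))
    (hdense : ∀ x ∈ X,
      x ∈ closure {y | y ∈ X ∧ ∃ k : ℕ, 0 < k ∧ ∀ n : ℤ, y (n + k) = y n})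
    (n : ℕ) :
    ∃ M : List A, n ≤ M.length ∧ Synchronizing X M ∧ ¬ OverlapsSelfNontrivially M := by
  classical
  obtain ⟨x₀, hx₀⟩ := hinf.nonempty
  obtain ⟨s, hs⟩ := hsync [] ⟨x₀, hx₀, occursIn_window x₀ 0 0⟩
  rw [List.nil_append] at hs
  obtain ⟨x, hx, hxs⟩ := hs.1
  obtain ⟨i, hxs⟩ := occursIn_iff_window.1 hxs
  obtain ⟨y, ⟨hyX, k, hk, hy : Periodic y k⟩, hys⟩ :=
    exists_window_eq_of_mem_closure (hdense x hx) i s.length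
  obtain ⟨w, hw, hwy⟩ := exists_inLanguage_not_occursIn hinf hy hk
  obtain ⟨D, c, hD, hc, hDc⟩ :=
    exists_inLanguage_window_append_ne htrans hyX hw hwy (n + 2 * k + s.length)
  obtain ⟨lam, hlam, hB⟩ := hy.exists_not_overlapsSelfNontrivially_window_append hk c
  have hsplit : window y 0 D = window y 0 lam ++ window y lam (D - lam) := by
    have h := window_add y 0 lam (D - lam)
    rwa [Nat.add_sub_cancel' (by omega), zero_add] at h
  have hBX : InLanguage X (window y lam (D - lam) ++ [c]) := by
    refine hDc.of_infix ?_
    rw [hsplit, List.append_assoc]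
    exact (List.suffix_append _ _).isInfix
  have hsB : s <:+: window y lam (D - lam) ++ [c] := by
    rw [← hxs, ← hys]
    exact (hy.window_infix_window hk i lam (by omega)).trans (List.prefix_append _ _).isInfix
  have hDlam : y (lam + (D - lam : ℕ)) ≠ c := by
    rwa [Nat.cast_sub (by omega), add_sub_cancel, ne_comm]
  exact ⟨_, by simp; omega, hs.of_infix hsB hBX, hB _ hDlam⟩

/-- In a transitive sofic shift, for every `n` there is a synchronizing word of length
at least `n` not overlapping itself nontrivially.  We axiomatize the needed facts about
transitive sofic shifts: transitivity, right-extension to synchronizing words, and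
density of periodic points. -/
theorem stmt3 {A : Type*} [Fintype A] [TopologicalSpace A] [DiscreteTopology A]
    (X : Set (ℤ → A)) (hcl : IsClosed X)
    (hinv : ∀ x ∈ X, shift x ∈ X) (hinv' : ∀ x ∈ X, (fun n : ℤ => x (n - 1)) ∈ X)
    (hinf : X.Infinite)
    (htrans : ∀ u w : List A, InLanguage X u → InLanguage X w →
      ∃ v : List A, InLanguage X (u ++ v ++ w))
    (hsync : ∀ w : List A, InLanguage X w → ∃ u : List A, Synchronizing X (w ++ u))
    (hdense : ∀ x ∈ X,
      x ∈ closure {y | y ∈ X ∧ ∃ k : ℕ, 0 < k ∧ ∀ n : ℤ, y (n + k) = y n})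
    (n : ℕ) :
    ∃ M : List A, n ≤ M.length ∧ Synchronizing X M ∧ ¬ OverlapsSelfNontrivially M :=
  stmt3_general X hinf htrans hsync hdense n
end

section
/- Let Q_k be the set of points of a subshift X that are left-k-periodic up to index k exactly. Then Q_k is invariant under the natural Aut(X)-action twisted by shifts: the translates σ^i Q_k for i ∈ ℤ are pairwise disjoint, and for every automorphism g and x ∈ Q_k there is a unique i ∈ ℤ with g x ∈ σ^i Q_k. -/
/-- `σ^i`, i.e. `(shiftIter i x) n = x (n + i)`. -/
def shiftIter {A : Type*} (i : ℤ) (x : ℤ → A) : ℤ → A := fun n => x (n + i)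

/-- The set of points of `X` which are left-`k`-periodic up to index `k` exactly
(with `k` the minimal left period). -/
def Qset {A : Type*} (X : Set (ℤ → A)) (k : ℕ) : Set (ℤ → A) :=
  {x | x ∈ X ∧ (∀ n : ℤ, n < k → x n = x (n - k)) ∧ x (k : ℤ) ≠ x ((k : ℤ) - k) ∧
    ∀ k' : ℕ, 0 < k' → k' < k → ¬ ∀ n : ℤ, n < k → x n = x (n - k')}

open Function Filter Topology

section Shift

variable {A : Type*}

@[simp]
lemma shiftIter_apply (i : ℤ) (x : ℤ → A) (n : ℤ) : shiftIter i x n = x (n + i) := rfl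

@[simp]
lemma shiftIter_zero (x : ℤ → A) : shiftIter 0 x = x := by
  funext n
  simp

@[simp]
lemma shiftIter_shiftIter (i j : ℤ) (x : ℤ → A) :
    shiftIter i (shiftIter j x) = shiftIter (i + j) x := by
  funext n
  simp [add_assoc]

lemma shiftIter_eq_shiftIter_iff {i j : ℤ} {x y : ℤ → A} :
    shiftIter i x = shiftIter j y ↔ x = shiftIter (j - i) y := by
  constructor
  · intro h
    simpa [neg_add_eq_sub] using congrArg (shiftIter (-i)) h
  · rintro rfl
    simp

lemma shiftIter_mem {X : Set (ℤ → A)} (hinv : ∀ x ∈ X, shift x ∈ X)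
    (hinv' : ∀ x ∈ X, (fun n : ℤ => x (n - 1)) ∈ X) (i : ℤ) :
    ∀ x ∈ X, shiftIter i x ∈ X := by
  induction i using Int.induction_on with
  | zero => simp
  | succ i ih =>
    intro x hx
    convert hinv _ (ih x hx) using 1
    funext n
    simp [shift, add_assoc, add_comm 1 (i : ℤ)]
  | pred i ih =>
    intro x hx
    convert hinv' _ (ih x hx) using 1
    funext n
    simp only [shiftIter_apply]
    ring_nf

end Shift

section LeftPeriodic

variable {A : Type*}

def LeftPeriodicBelow (d : ℕ) (c : ℤ) (x : ℤ → A) : Prop :=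
  ∀ n : ℤ, n < c → x n = x (n - d)

namespace LeftPeriodicBelow

variable {d : ℕ} {c : ℤ} {x : ℤ → A}

lemma sub_mul_eq (h : LeftPeriodicBelow d c x) {m : ℤ} (hm : m < c) (t : ℕ) :
    x (m - d * t) = x m := by
  induction t with
  | zero => simp
  | succ t ih =>
    have hlt : m - d * t < c := by
      have : (0 : ℤ) ≤ d * t := by positivity
      linarith
    rw [← ih, h _ hlt]
    congr 1
    push_cast
    ring

lemma eq_of_dvd (h : LeftPeriodicBelow d c x) {m m' : ℤ} (hm : m < c) (hm' : m' < c)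
    (hdvd : (d : ℤ) ∣ m - m') : x m = x m' := by
  obtain ⟨s, hs⟩ := hdvd
  obtain ⟨t, rfl | rfl⟩ := Int.eq_nat_or_neg s
  · rw [show m' = m - d * t by linarith, h.sub_mul_eq hm]
  · rw [show m = m' - d * t by linarith, h.sub_mul_eq hm']

lemma extend (h : LeftPeriodicBelow d c x) (hd : 0 < d) {d' : ℕ} {M : ℤ}
    (h' : LeftPeriodicBelow d' M x) : LeftPeriodicBelow d' c x := by
  intro n hn
  obtain ⟨t, ht⟩ := Archimedean.arch (n - M + 1) (by exact_mod_cast hd : (0 : ℤ) < d)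
  rw [nsmul_eq_mul] at ht
  calc x n = x (n - d * t) := (h.sub_mul_eq hn t).symm
    _ = x (n - d * t - d') := h' _ (by linarith)
    _ = x (n - d' - d * t) := by ring_nf
    _ = x (n - d') := h.sub_mul_eq (by omega) t

lemma exists_not_eq (h : LeftPeriodicBelow d c x) (hx : ¬ Periodic x d) :
    ∃ N, LeftPeriodicBelow d N x ∧ x N ≠ x (N - d) := by
  classical
  have hfail : ∃ n, x n ≠ x (n - d) := by
    contrapose! hx
    intro n
    simpa using hx (n + d)
  have hbdd : ∃ b, ∀ n, x n ≠ x (n - d) → b ≤ n :=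
    ⟨c, fun n hn => by
      by_contra! hlt
      exact hn (h n hlt)⟩
  obtain ⟨N, hN, hmin⟩ := Int.exists_least_of_bdd hbdd hfail
  refine ⟨N, fun n hn => ?_, hN⟩
  by_contra hne
  exact (hmin n hne).not_gt hn

end LeftPeriodicBelow

lemma leftPeriodicBelow_shiftIter_iff {d : ℕ} {c i : ℤ} {x : ℤ → A} :
    LeftPeriodicBelow d c (shiftIter i x) ↔ LeftPeriodicBelow d (c + i) x := by
  constructor
  · intro h n hn
    convert h (n - i) (by omega) using 2 <;> simp only [shiftIter_apply] <;> ring_nf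
  · intro h n hn
    simpa [sub_add_eq_add_sub] using h (n + i) (by omega)

lemma Function.Periodic.leftPeriodicBelow {d : ℕ} {x : ℤ → A} (h : Periodic x d) (c : ℤ) :
    LeftPeriodicBelow d c x :=
  fun n _ => by simpa using h (n - d)

end LeftPeriodic

section Equivariant

variable {A : Type*} {X : Set (ℤ → A)}

def ShiftEquivariant (F : X → X) : Prop :=
  ∀ (i : ℤ) (z w : X), (w : ℤ → A) = shiftIter i z → (F w : ℤ → A) = shiftIter i (F z)

lemma shiftEquivariant_of_shift (hinv : ∀ x ∈ X, shift x ∈ X)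
    (hinv' : ∀ x ∈ X, (fun n : ℤ => x (n - 1)) ∈ X) {F : X → X}
    (hF : ∀ (x : X) (hs : shift (x : ℤ → A) ∈ X),
      (F ⟨shift (x : ℤ → A), hs⟩ : ℤ → A) = shift (F x : ℤ → A)) :
    ShiftEquivariant F := by
  intro i
  induction i using Int.induction_on with
  | zero =>
    intro z w hw
    rw [Subtype.ext (by simpa using hw : (w : ℤ → A) = z)]
    simp
  | succ i ih =>
    intro z w hw
    let v : X := ⟨fun n => (w : ℤ → A) (n - 1), hinv' _ w.2⟩
    have hv : (v : ℤ → A) = shiftIter i z := by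
      funext n
      simp only [v, hw, shiftIter_apply]
      ring_nf
    have hwv : w = ⟨shift v, hinv _ v.2⟩ := Subtype.ext (by funext n; simp [v, shift])
    rw [hwv, hF v, ih z v hv]
    funext n
    simp only [shift, shiftIter_apply]
    ring_nf
  | pred i ih =>
    intro z w hw
    let v : X := ⟨shift w, hinv _ w.2⟩
    have hv : (v : ℤ → A) = shiftIter (-i) z := by
      funext n
      simp only [v, hw, shift, shiftIter_apply]
      ring_nf
    have hFv : shift (F w : ℤ → A) = shiftIter (-i) (F z) := (hF w _).symm.trans (ih z v hv)
    calc (F w : ℤ → A) = shiftIter (-1) (shift (F w)) := by funext n; simp [shift]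
      _ = shiftIter (-i - 1) (F z) := by rw [hFv, shiftIter_shiftIter]; ring_nf

namespace ShiftEquivariant

variable {F : X → X}

lemma periodic (hF : ShiftEquivariant F) {z : X} {d : ℤ} (hz : Periodic (z : ℤ → A) d) :
    Periodic (F z : ℤ → A) d := fun n =>
  (congrFun (hF d z z (funext fun m => (hz m).symm)) n).symm

lemma symm [TopologicalSpace A] (hX : ∀ i, ∀ x ∈ X, shiftIter i x ∈ X) {g : X ≃ₜ X}
    (hg : ShiftEquivariant g) : ShiftEquivariant g.symm := by
  intro i z w hw
  let v : X := ⟨shiftIter i (g.symm z), hX i _ (g.symm z).2⟩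
  have hgv : g v = w := Subtype.ext (by rw [hg i (g.symm z) v rfl, g.apply_symm_apply, hw])
  rw [← hgv, g.symm_apply_apply]

end ShiftEquivariant

end Equivariant

section Topology

variable {A : Type*} [TopologicalSpace A] {X : Set (ℤ → A)}

lemma exists_periodic_mem_eq_of_leftPeriodicBelow (hcl : IsClosed X)
    (hX : ∀ i, ∀ x ∈ X, shiftIter i x ∈ X) {u : ℤ → A} (hu : u ∈ X) {d : ℕ} (hd : 0 < d)
    {c : ℤ} (h : LeftPeriodicBelow d c u) :
    ∃ q ∈ X, Periodic q d ∧ ∀ n < c, u n = q n := by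
  have hd' : (0 : ℤ) < d := by exact_mod_cast hd
  let q : ℤ → A := fun n => u (n - d * ((n - c) / d + 1))
  have hlt : ∀ n, n - d * ((n - c) / d + 1) < c := fun n => by
    have := Int.emod_add_mul_ediv (n - c) d
    have := Int.emod_lt_of_pos (n - c) hd'
    linarith
  have hagree : ∀ n < c, u n = q n := fun n hn =>
    h.eq_of_dvd hn (hlt n) ⟨(n - c) / d + 1, by ring⟩
  have hq : Periodic q d := fun n => by
    simp only [q]
    rw [show n + d - c = n - c + 1 * d by ring, Int.add_mul_ediv_right _ _ hd'.ne']
    ring_nf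
  refine ⟨q, ?_, hq, hagree⟩
  have hlim : Tendsto (fun j : ℕ => shiftIter (-(d * j)) u) atTop (𝓝 q) := by
    refine tendsto_pi_nhds.2 fun n => tendsto_const_nhds.congr' ?_
    obtain ⟨t, ht⟩ := Archimedean.arch (n - c + 1) hd'
    rw [nsmul_eq_mul] at ht
    filter_upwards [eventually_ge_atTop t] with j hj
    have hj' : (d : ℤ) * t ≤ d * j := by gcongr
    rw [shiftIter_apply, ← sub_eq_add_neg, hagree _ (by linarith)]
    simpa [mul_comm] using ((hq.int_mul j).sub_eq n).symm
  exact hcl.mem_of_tendsto hlim (Eventually.of_forall fun j => hX _ _ hu)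

lemma Continuous.exists_eq_of_eqOn_Iio {B : Type*} [TopologicalSpace B] [DiscreteTopology B]
    {f : X → B} (hf : Continuous f) (z₀ : X) :
    ∃ b : ℤ, ∀ z : X, (∀ m < b, (z : ℤ → A) m = (z₀ : ℤ → A) m) → f z = f z₀ := by
  have hnhds : f ⁻¹' {f z₀} ∈ 𝓝 z₀ :=
    hf.continuousAt.preimage_mem_nhds ((isOpen_discrete _).mem_nhds rfl)
  obtain ⟨U, hU, hUsub⟩ := (mem_nhds_subtype _ _ _).1 hnhds
  rw [nhds_pi, Filter.mem_pi] at hU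
  obtain ⟨I, hI, t, ht, hIU⟩ := hU
  obtain ⟨b, hb⟩ := hI.bddAbove
  refine ⟨b + 1, fun z hz => hUsub (hIU fun m hm => ?_)⟩
  rw [hz m (by linarith [hb hm])]
  exact mem_of_mem_nhds (ht m)

variable [DiscreteTopology A]

lemma ShiftEquivariant.exists_eqOn_Iio_of_periodic (hX : ∀ i, ∀ x ∈ X, shiftIter i x ∈ X)
    {F : X → X} (hFc : Continuous F) (hF : ShiftEquivariant F) {u q : X} {d : ℕ} (hd : 0 < d)
    (hq : Periodic (q : ℤ → A) d) {c : ℤ} (huq : ∀ n < c, (u : ℤ → A) n = (q : ℤ → A) n) :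
    ∃ M, ∀ n < M, (F u : ℤ → A) n = (F q : ℤ → A) n := by
  have hd' : (0 : ℤ) < d := by exact_mod_cast hd
  -- Continuity of `F` at the single point `q`, observed on a full period window, suffices.
  let f : X → (Set.Ico (0 : ℤ) d → A) := fun z j => (F z : ℤ → A) j
  have hf : Continuous f :=
    continuous_pi fun j => (continuous_apply _).comp (continuous_subtype_val.comp hFc)
  obtain ⟨b, hb⟩ := hf.exists_eq_of_eqOn_Iio q
  refine ⟨c - b + 1, fun n hn => ?_⟩
  have hn_eq : n % d + d * (n / d) = n := Int.emod_add_mul_ediv n d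
  have hr : n % d ∈ Set.Ico (0 : ℤ) d := ⟨Int.emod_nonneg _ hd'.ne', Int.emod_lt_of_pos _ hd'⟩
  let v : X := ⟨shiftIter (d * (n / d)) u, hX _ _ u.2⟩
  have hv : f v = f q := hb v fun m hm => by
    simp only [v, shiftIter_apply]
    rw [huq _ (by linarith [hr.1])]
    simpa [mul_comm] using hq.int_mul (n / d) m
  have key := congrFun hv ⟨n % d, hr⟩
  simp only [f, hF _ u v rfl, shiftIter_apply, hn_eq] at key
  rw [key, ← hn_eq]
  simpa [mul_comm] using ((hF.periodic hq).int_mul (n / d) (n % d)).symm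

lemma ShiftEquivariant.exists_leftPeriodicBelow_map (hcl : IsClosed X)
    (hX : ∀ i, ∀ x ∈ X, shiftIter i x ∈ X) {F : X → X} (hFc : Continuous F)
    (hF : ShiftEquivariant F) {u : X} {d : ℕ} (hd : 0 < d) {c : ℤ}
    (h : LeftPeriodicBelow d c (u : ℤ → A)) : ∃ M, LeftPeriodicBelow d M (F u : ℤ → A) := by
  obtain ⟨q, hqX, hq, huq⟩ := exists_periodic_mem_eq_of_leftPeriodicBelow hcl hX u.2 hd h
  obtain ⟨M, hM⟩ := hF.exists_eqOn_Iio_of_periodic hX hFc hd (q := ⟨q, hqX⟩) hq huq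
  refine ⟨M, fun n hn => ?_⟩
  rw [hM n hn, hM (n - d) (by omega)]
  exact ((hF.periodic hq).leftPeriodicBelow (n + 1)) n (by omega)

end Topology

section Qset

variable {A : Type*} {X : Set (ℤ → A)} {k : ℕ}

lemma pos_of_mem_Qset {x : ℤ → A} (hx : x ∈ Qset X k) : 0 < k := by
  rcases Nat.eq_zero_or_pos k with rfl | hk
  · exact (hx.2.2.1 (by simp)).elim
  · exact hk

lemma shiftIter_notMem_Qset {x : ℤ → A} (hx : x ∈ Qset X k) {i : ℤ} (hi : 0 < i) :
    shiftIter i x ∉ Qset X k := fun h =>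
  hx.2.2.1 (leftPeriodicBelow_shiftIter_iff.1 (h.2.1 : LeftPeriodicBelow k k _) k (by omega))

lemma pairwise_disjoint_shiftIter_image_Qset (X : Set (ℤ → A)) (k : ℕ) :
    Pairwise (Disjoint on fun i : ℤ => shiftIter i '' Qset X k) := by
  intro i j hij
  wlog h : i < j generalizing i j
  · exact (this hij.symm (lt_of_le_of_ne (not_lt.1 h) hij.symm)).symm
  rw [onFun, Set.disjoint_left]
  rintro _ ⟨x, hx, rfl⟩ ⟨y, hy, hxy⟩
  exact shiftIter_notMem_Qset hy (sub_pos.2 h) (shiftIter_eq_shiftIter_iff.1 hxy.symm ▸ hx)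

variable [TopologicalSpace A] [DiscreteTopology A]

lemma exists_map_mem_shiftIter_image_Qset (hcl : IsClosed X)
    (hX : ∀ i, ∀ x ∈ X, shiftIter i x ∈ X) {g : X ≃ₜ X} (hg : ShiftEquivariant g) {x : X}
    (hx : (x : ℤ → A) ∈ Qset X k) : ∃ i : ℤ, (g x : ℤ → A) ∈ shiftIter i '' Qset X k := by
  have hk := pos_of_mem_Qset hx
  set y : ℤ → A := (g x : ℤ → A)
  obtain ⟨M, hM⟩ := hg.exists_leftPeriodicBelow_map hcl hX g.continuous hk hx.2.1
  have hy : ¬ Periodic y k := fun hper => by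
    have := (hg.symm hX).periodic (z := g x) hper
    rw [Homeomorph.symm_apply_apply] at this
    exact hx.2.2.1 (by simpa using this 0)
  obtain ⟨N, hN, hNfail⟩ := hM.exists_not_eq hy
  refine ⟨k - N, shiftIter (N - k) y, ⟨hX _ _ (g x).2, ?_, ?_, ?_⟩, by simp⟩
  · exact leftPeriodicBelow_shiftIter_iff.2 (by simpa using hN)
  · simpa using hNfail
  · intro k' hk' hk'k h'
    have hyk' : LeftPeriodicBelow k' N y := by
      simpa using leftPeriodicBelow_shiftIter_iff.1 (h' : LeftPeriodicBelow k' k _)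
    obtain ⟨M', hM'⟩ := (hg.symm hX).exists_leftPeriodicBelow_map hcl hX g.symm.continuous hk'
      (u := g x) hyk'
    rw [Homeomorph.symm_apply_apply] at hM'
    exact hx.2.2.2 k' hk' hk'k (LeftPeriodicBelow.extend hx.2.1 hk hM')

end Qset

theorem stmt8_general {A : Type*} [TopologicalSpace A] [DiscreteTopology A]
    (X : Set (ℤ → A)) (hcl : IsClosed X)
    (hinv : ∀ x ∈ X, shift x ∈ X) (hinv' : ∀ x ∈ X, (fun n : ℤ => x (n - 1)) ∈ X)
    (k : ℕ) :
    (∀ i j : ℤ, i ≠ j →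
      Disjoint (shiftIter i '' Qset X k) (shiftIter j '' Qset X k)) ∧
    (∀ g : X ≃ₜ X,
      (∀ (x : X) (hs : shift (x : ℤ → A) ∈ X),
        ((g ⟨shift (x : ℤ → A), hs⟩ : X) : ℤ → A) = shift ((g x : X) : ℤ → A)) →
      ∀ (x : ℤ → A) (hx : x ∈ Qset X k),
        ∃! i : ℤ, ((g ⟨x, hx.1⟩ : X) : ℤ → A) ∈ shiftIter i '' Qset X k) := by
  have hdisj := pairwise_disjoint_shiftIter_image_Qset X k
  refine ⟨fun i j hij => hdisj hij, fun g hg x hx => ?_⟩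
  have hX := shiftIter_mem hinv hinv'
  obtain ⟨i, hi⟩ := exists_map_mem_shiftIter_image_Qset hcl hX
    (shiftEquivariant_of_shift hinv hinv' hg) (x := ⟨x, hx.1⟩) hx
  refine ⟨i, hi, fun j hj => ?_⟩
  by_contra hji
  exact Set.disjoint_left.1 (hdisj hji) hj hi

/-- The translates `σ^i Q_k` are pairwise disjoint, and every automorphism maps each
point of `Q_k` into a unique translate `σ^i Q_k`. -/
theorem stmt8 {A : Type*} [Fintype A] [TopologicalSpace A] [DiscreteTopology A]
    (X : Set (ℤ → A)) (hcl : IsClosed X)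
    (hinv : ∀ x ∈ X, shift x ∈ X) (hinv' : ∀ x ∈ X, (fun n : ℤ => x (n - 1)) ∈ X)
    (k : ℕ) (hk : 0 < k) :
    (∀ i j : ℤ, i ≠ j →
      Disjoint (shiftIter i '' Qset X k) (shiftIter j '' Qset X k)) ∧
    (∀ g : X ≃ₜ X,
      (∀ (x : X) (hs : shift (x : ℤ → A) ∈ X),
        ((g ⟨shift (x : ℤ → A), hs⟩ : X) : ℤ → A) = shift ((g x : X) : ℤ → A)) →
      ∀ (x : ℤ → A) (hx : x ∈ Qset X k),
        ∃! i : ℤ, ((g ⟨x, hx.1⟩ : X) : ℤ → A) ∈ shiftIter i '' Qset X k) :=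
  stmt8_general X hcl hinv hinv' k
end

section
/- Let G be a group acting on compact G-spaces, and suppose Ω is a G-boundary (the action is minimal and strongly proximal). Then every amenable normal subgroup A ◁ G acts trivially on Ω, i.e., A is contained in the kernel of G → Homeo(Ω). -/
open MeasureTheory

def StronglyProximal (G Ω : Type*) [Group G] [TopologicalSpace Ω] [MeasurableSpace Ω]
    [OpensMeasurableSpace Ω] [MulAction G Ω] : Prop :=
  ∀ μ : ProbabilityMeasure Ω, ∃ ω : Ω,
    (⟨Measure.dirac ω, inferInstance⟩ : ProbabilityMeasure Ω) ∈
      closure {ν : ProbabilityMeasure Ω | ∃ g : G,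
        (ν : Measure Ω) = (μ : Measure Ω).map (fun ω' => g • ω')}

universe u

/-!
An amenable `H` fixes a probability measure `μ` on `Ω`. Since `H` is normal, every `G`-translate
of `μ` is again `H`-invariant, and so is every weak-* limit of translates; strong proximality
provides a Dirac mass `δ_x` among these limits, so `x` is fixed by `H`. The fixed-point set of `H`
is closed, nonempty and `G`-invariant (normality again), hence everything by minimality.
-/

open MulAction Set

instance Subgroup.continuousConstSMul {G α : Type*} [Group G] [TopologicalSpace α]
    [MulAction G α] [ContinuousConstSMul G α] (H : Subgroup G) : ContinuousConstSMul H α :=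
  ⟨fun a => continuous_const_smul (a : G)⟩

section FixedPoints

variable {M α : Type*} [TopologicalSpace α] [T2Space α]

theorem MulAction.isClosed_fixedPoints [Monoid M] [MulAction M α] [ContinuousConstSMul M α] :
    IsClosed (fixedPoints M α) := by
  simp only [fixedPoints, ofPred_forall]
  exact isClosed_iInter fun m => isClosed_eq (continuous_const_smul m) continuous_id

theorem MulAction.fixedPoints_eq_univ_of_isMinimal [Group M] [MulAction M α]
    [ContinuousConstSMul M α] [IsMinimal M α] (H : Subgroup M) [H.Normal]
    (hne : (fixedPoints H α).Nonempty) : fixedPoints H α = univ :=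
  (eq_empty_or_univ_of_smul_invariant_closed M isClosed_fixedPoints fun g _ ⟨_, hx, hgx⟩ =>
    hgx ▸ smul_mem_fixedPoints_of_normal g hx).resolve_left hne.ne_empty

end FixedPoints

section InvariantMeasures

variable {M G Ω : Type*} [MeasurableSpace Ω]

theorem MeasureTheory.isClosed_setOf_forall_map_smul_eq [Monoid M] [MulAction M Ω]
    [TopologicalSpace Ω] [HasOuterApproxClosed Ω] [BorelSpace Ω] [ContinuousConstSMul M Ω] :
    IsClosed {ν : ProbabilityMeasure Ω | ∀ m : M, (ν : Measure Ω).map (m • ·) = ν} := by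
  have hmap (m : M) (ν : ProbabilityMeasure Ω) :
      (ν : Measure Ω).map (m • ·) = ν ↔
        ν.map (continuous_const_smul m).measurable.aemeasurable = ν := by
    rw [← ProbabilityMeasure.toMeasure_injective.eq_iff, ProbabilityMeasure.toMeasure_map]
  simp only [hmap, ofPred_forall]
  exact isClosed_iInter fun m =>
    isClosed_eq (ProbabilityMeasure.continuous_map (continuous_const_smul m)) continuous_id

theorem MeasureTheory.Measure.map_smul_map_smul_of_normal [Group G] [MulAction G Ω]
    [MeasurableConstSMul G Ω] {H : Subgroup G} [hH : H.Normal] {μ : Measure Ω}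
    (hμ : ∀ a : H, μ.map (a • ·) = μ) (g : G) (a : H) :
    (μ.map (g • ·)).map (a • ·) = μ.map (g • ·) := by
  have hconj : g⁻¹ * a * g ∈ H := by simpa using hH.conj_mem a a.2 g⁻¹
  have hcomm : (fun x : Ω => (a : G) • x) ∘ (g • ·) = (g • ·) ∘ ((g⁻¹ * a * g) • ·) := by
    funext x
    simp [smul_smul, mul_assoc]
  simp only [Subgroup.smul_def] at hμ ⊢
  rw [Measure.map_map (measurable_const_smul _) (measurable_const_smul _), hcomm,
    ← Measure.map_map (measurable_const_smul _) (measurable_const_smul _), hμ ⟨_, hconj⟩]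

theorem MeasureTheory.Measure.smul_eq_self_of_map_dirac_eq [SMul M Ω] [MeasurableConstSMul M Ω]
    [MeasurableSingletonClass Ω] {m : M} {x : Ω}
    (h : (Measure.dirac x).map (m • ·) = Measure.dirac x) : m • x = x := by
  rwa [Measure.map_dirac' (measurable_const_smul m), dirac_eq_dirac_iff] at h

end InvariantMeasures

theorem StronglyProximal.fixedPoints_nonempty_of_normal {G Ω : Type*} [Group G]
    [TopologicalSpace Ω] [T1Space Ω] [HasOuterApproxClosed Ω] [MeasurableSpace Ω] [BorelSpace Ω]
    [MulAction G Ω] [ContinuousConstSMul G Ω] (hsp : StronglyProximal G Ω)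
    (H : Subgroup G) [H.Normal] {μ : ProbabilityMeasure Ω}
    (hμ : ∀ a : H, (μ : Measure Ω).map (a • ·) = μ) : (fixedPoints H Ω).Nonempty := by
  obtain ⟨x, hx⟩ := hsp μ
  have htranslates :
      {ν : ProbabilityMeasure Ω | ∃ g : G, (ν : Measure Ω) = (μ : Measure Ω).map (g • ·)} ⊆
        {ν | ∀ a : H, (ν : Measure Ω).map (a • ·) = ν} := by
    rintro ν ⟨g, hg⟩ a
    rw [hg, Measure.map_smul_map_smul_of_normal hμ]
  exact ⟨x, fun a => Measure.smul_eq_self_of_map_dirac_eq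
    (isClosed_setOf_forall_map_smul_eq.closure_subset_iff.mpr htranslates hx a)⟩

/-- If `Ω` is a `G`-boundary (minimal and strongly proximal), every amenable normal
subgroup `H ◁ G` acts trivially on `Ω`.  Amenability of `H` is taken in the fixed-point
formulation: every continuous `H`-action on a nonempty compact space admits an
invariant Borel probability measure. -/
theorem stmt17 {G : Type*} [Group G] {Ω : Type u}
    [MetricSpace Ω] [CompactSpace Ω] [Nonempty Ω]
    [MeasurableSpace Ω] [BorelSpace Ω] [MulAction G Ω]
    (hc : ∀ g : G, Continuous fun ω : Ω => g • ω)
    (hmin : ∀ ω : Ω, Dense (MulAction.orbit G ω))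
    (hsp : StronglyProximal G Ω)
    (H : Subgroup G) (hn : H.Normal)
    (hamen : ∀ (Y : Type u) [TopologicalSpace Y] [CompactSpace Y] [MeasurableSpace Y]
      [BorelSpace Y] [Nonempty Y] [MulAction H Y],
      (∀ a : H, Continuous fun y : Y => a • y) →
      ∃ μ : ProbabilityMeasure Y, ∀ a : H,
        (μ : Measure Y).map (fun y : Y => a • y) = (μ : Measure Y)) :
    ∀ a ∈ H, ∀ ω : Ω, a • ω = ω := by
  have : ContinuousConstSMul G Ω := ⟨hc⟩
  have : IsMinimal G Ω := ⟨hmin⟩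
  obtain ⟨μ, hμ⟩ := hamen Ω fun a => hc a
  have hfix := fixedPoints_eq_univ_of_isMinimal H (hsp.fixedPoints_nonempty_of_normal H hμ)
  exact fun a ha ω => eq_univ_iff_forall.mp hfix ω ⟨a, ha⟩
end
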